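/- arXiv:2209.12934 — 6 statements merged into one kernel-verified Lean document; each statement's English description precedes it below -/
import Mathlib

section
/- For all real numbers r1, r2, x1, x2 satisfying 0 ≤ x1 ≤ r1, 0 ≤ x2 ≤ r2, and x1 + x2 ≤ 1, the following inequality holds: max{ r1 + r2 - (r2·x1 + r1·x2)/2 , r1 , r2 , 1 + (r1 - x1)/2 , 1 + (r2 - x2)/2 } ≥ (4/7)·(r1 + r2 + 1 - x1 - x2). -/
theorem stmt_0 (r1 r2 x1 x2 : ℝ)
    (hx1 : 0 ≤ x1) (hr1 : x1 ≤ r1) (hx2 : 0 ≤ x2) (hr2 : x2 ≤ r2)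
    (hsum : x1 + x2 ≤ 1) :
    max (max (max (max (r1 + r2 - (r2 * x1 + r1 * x2) / 2) r1) r2)
      (1 + (r1 - x1) / 2)) (1 + (r2 - x2) / 2)
      ≥ (4 / 7) * (r1 + r2 + 1 - x1 - x2) := by
  by_contra h
  push_neg at h
  simp only [max_lt_iff] at h
  obtain ⟨⟨⟨⟨h1, h2⟩, h3⟩, h4⟩, h5⟩ := h
  nlinarith [mul_nonneg hx1 hx2, mul_nonneg (sub_nonneg.2 hr1) (sub_nonneg.2 hr2), mul_nonneg (sub_nonneg.2 hr1) hx2, mul_nonneg (sub_nonneg.2 hr2) hx1, mul_nonneg (sub_nonneg.2 hr1) (sub_nonneg.2 hsum), mul_nonneg (sub_nonneg.2 hr2) (sub_nonneg.2 hsum)]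
end

section
/- For all real numbers r1, r2, x1, x2 satisfying 0 ≤ x1 ≤ r1, 0 ≤ x2 ≤ r2, x1 + x2 ≤ 1, 1 ≤ r1, and r1 ≤ r2, the following inequality holds: max{ r1 + r2 - (r2·x1 + r1·x2)/2 , r2 } ≥ (2/3)·(r1 + r2 + 1 - x1 - x2). -/
theorem stmt_1 (r1 r2 x1 x2 : ℝ)
    (hx1 : 0 ≤ x1) (hr1 : x1 ≤ r1) (hx2 : 0 ≤ x2) (hr2 : x2 ≤ r2)
    (hsum : x1 + x2 ≤ 1) (h1 : 1 ≤ r1) (h12 : r1 ≤ r2) :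
    max (r1 + r2 - (r2 * x1 + r1 * x2) / 2) r2
      ≥ (2 / 3) * (r1 + r2 + 1 - x1 - x2) := by
  rcases le_or_gt (2*r1 + 2 - 2*x1 - 2*x2) r2 with h | h
  · exact le_trans (by linarith) (le_max_right _ _)
  · refine le_trans ?_ (le_max_left _ _)
    nlinarith [mul_nonneg hx1 (sub_nonneg.2 h12), mul_nonneg hx2 (sub_nonneg.2 h12),
      mul_nonneg (sub_nonneg.2 h1) (sub_nonneg.2 hsum),
      mul_nonneg (sub_nonneg.2 h12) (sub_nonneg.2 hsum),
      mul_nonneg hx1 hx2, mul_nonneg hx1 hx1, mul_nonneg hx2 hx2]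
end

section
/- For all real numbers r1, r2, x1, x2 satisfying 0 ≤ x1 ≤ r1, 0 ≤ x2 ≤ r2, x1 + x2 ≤ 1, r1 < 1, and r1 ≤ r2, the following inequality holds: max{ r1 + r2 - (r2·x1 + r1·x2)/2 , r2 , 1 + (r1 - x1)/2 , 1 + (r2 - x2)/2 } ≥ (4/7)·(r1 + r2 + 1 - x1 - x2). -/
theorem stmt_2 (r1 r2 x1 x2 : ℝ)
    (hx1 : 0 ≤ x1) (hr1 : x1 ≤ r1) (hx2 : 0 ≤ x2) (hr2 : x2 ≤ r2)
    (hsum : x1 + x2 ≤ 1) (h1 : r1 < 1) (h12 : r1 ≤ r2) :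
    max (max (max (r1 + r2 - (r2 * x1 + r1 * x2) / 2) r2)
      (1 + (r1 - x1) / 2)) (1 + (r2 - x2) / 2)
      ≥ (4 / 7) * (r1 + r2 + 1 - x1 - x2) := by
  by_contra h
  push_neg at h
  set M := (4 / 7) * (r1 + r2 + 1 - x1 - x2) with hM
  have h4 : 1 + (r2 - x2) / 2 < M := lt_of_le_of_lt (le_max_right _ _) h
  have h3 : 1 + (r1 - x1) / 2 < M :=
    lt_of_le_of_lt (le_trans (le_max_right _ _) (le_max_left _ _)) h
  have h2 : r2 < M :=
    lt_of_le_of_lt (le_trans (le_trans (le_max_right _ _) (le_max_left _ _)) (le_max_left _ _)) h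
  have h1' : r1 + r2 - (r2 * x1 + r1 * x2) / 2 < M :=
    lt_of_le_of_lt (le_trans (le_trans (le_max_left _ _) (le_max_left _ _)) (le_max_left _ _)) h
  nlinarith [mul_nonneg hx1 hx2, mul_nonneg (sub_nonneg.2 hr1) hx2,
    mul_nonneg (sub_nonneg.2 hr2) hx1, mul_nonneg (sub_nonneg.2 h12) hx1,
    mul_nonneg (sub_nonneg.2 hsum) (sub_nonneg.2 hr1),
    mul_nonneg (sub_nonneg.2 hsum) (sub_nonneg.2 hr2),
    mul_nonneg (le_of_lt (sub_pos.2 h1)) hx2,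
    mul_nonneg (le_of_lt (sub_pos.2 h1)) hx1]
end

section
/- For all real numbers r and x satisfying r ≥ 1, 0 ≤ x ≤ 1, and x·r ≤ 2, one has 1 + (3/2)·r·x ≤ r + 2·x. -/
theorem stmt_4 (r x : ℝ) (hr : 1 ≤ r) (hx0 : 0 ≤ x) (hx1 : x ≤ 1)
    (hxr : x * r ≤ 2) :
    1 + (3 / 2) * r * x ≤ r + 2 * x := by
  nlinarith [mul_nonneg hx0 (sub_nonneg.2 hr), mul_nonneg (sub_nonneg.2 hx1) (sub_nonneg.2 hr), mul_nonneg hx0 (sub_nonneg.2 hx1)]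
end

section
/- For all real numbers r1, r2, x1 with r2 ≤ 2 and x1 ≥ 0, the following inequality holds: (7/4)·max{ r1 + r2 - r2·x1/2 , 1 + (r1 - x1)/2 , 1 + r2/2 } ≥ r1 + r2 + 1 - x1. -/
theorem stmt_5 (r1 r2 x1 : ℝ) (hr2 : r2 ≤ 2) (hx1 : 0 ≤ x1) :
    (7 / 4) * max (max (r1 + r2 - r2 * x1 / 2) (1 + (r1 - x1) / 2)) (1 + r2 / 2)
      ≥ r1 + r2 + 1 - x1 := by
  have hA : r1 + r2 - r2 * x1 / 2 ≤ max (max (r1 + r2 - r2 * x1 / 2) (1 + (r1 - x1) / 2)) (1 + r2 / 2) := le_max_of_le_left (le_max_left _ _)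
  have hB : 1 + (r1 - x1) / 2 ≤ max (max (r1 + r2 - r2 * x1 / 2) (1 + (r1 - x1) / 2)) (1 + r2 / 2) := le_max_of_le_left (le_max_right _ _)
  have hC : 1 + r2 / 2 ≤ max (max (r1 + r2 - r2 * x1 / 2) (1 + (r1 - x1) / 2)) (1 + r2 / 2) := le_max_right _ _
  nlinarith [mul_nonneg (sub_nonneg.2 hr2) hx1]
end

section
/- Let ε be a real number with 0 < ε < 1, and let n1, n2 be positive integers such that n1·ε² < 1. Set v1 = n1·ε and v2 = v1·(n2·ε + ε³). Then the fractional part of v2/ε² equals v1·ε; consequently v1 is uniquely determined by v2 (namely v1 = fract(v2/ε²)/ε). -/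
theorem stmt_12 (ε : ℝ) (hε0 : 0 < ε) (hε1 : ε < 1)
    (n1 n2 : ℕ) (hn1 : 0 < n1) (hn2 : 0 < n2)
    (hsmall : (n1 : ℝ) * ε ^ 2 < 1)
    (v1 v2 : ℝ) (hv1 : v1 = (n1 : ℝ) * ε)
    (hv2 : v2 = v1 * ((n2 : ℝ) * ε + ε ^ 3)) :
    Int.fract (v2 / ε ^ 2) = v1 * ε ∧ v1 = Int.fract (v2 / ε ^ 2) / ε := by
  have hεne : (ε : ℝ) ≠ 0 := ne_of_gt hε0
  have hkey : v2 / ε ^ 2 = ((n1 * n2 : ℤ) : ℝ) + (n1 : ℝ) * ε ^ 2 := by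
    subst hv1 hv2
    push_cast
    field_simp
  have hfr : Int.fract (v2 / ε ^ 2) = (n1 : ℝ) * ε ^ 2 := by
    rw [hkey, Int.fract_intCast_add, Int.fract_eq_self.2]
    constructor
    · positivity
    · exact hsmall
  constructor
  · rw [hfr, hv1]; ring
  · rw [hfr, hv1]; field_simp
end
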